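/- arXiv:2503.22505 — 5 statements merged into one kernel-verified Lean document; each statement's English description precedes it below -/
import Mathlib

section
/- Let (C•, δ•) be a cochain complex of Banach ℝ-modules and let n ∈ ℤ. Then C• satisfies the uniform boundary condition in degree n if and only if the n-th cohomology H^n(C•, δ•), equipped with the quotient seminorm, is a Banach space (i.e., the quotient seminorm is a complete norm). -/
/-- A cochain complex of Banach `ℝ`-modules: degreewise complete normed real vector
spaces with bounded (continuous) linear differentials squaring to zero. -/
structure BanachCC where
  C : ℤ → Type
  [grp : ∀ n, NormedAddCommGroup (C n)]
  [mod : ∀ n, NormedSpace ℝ (C n)]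
  [cpl : ∀ n, CompleteSpace (C n)]
  δ : ∀ n : ℤ, C n →L[ℝ] C (n + 1)
  δ_sq : ∀ n (x : C n), δ (n + 1) (δ n x) = 0

attribute [instance] BanachCC.grp BanachCC.mod BanachCC.cpl

/-- `κ`-uniform boundary condition in degree `n`. -/
def BanachCC.UBC (X : BanachCC) (κ : ℝ) (n : ℤ) : Prop :=
  ∀ b : X.C (n - 1 + 1), (∃ a, X.δ (n - 1) a = b) →
    ∃ c, X.δ (n - 1) c = b ∧ ‖c‖ ≤ κ * ‖b‖

/-- The `n`-th cohomology `ker δ^n / im δ^{n-1}` of the complex. -/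
abbrev BanachCC.Hcoh (X : BanachCC) (n : ℤ) :=
  (LinearMap.ker (X.δ (n - 1 + 1) : X.C (n - 1 + 1) →ₗ[ℝ] X.C (n - 1 + 1 + 1))) ⧸
    (Submodule.comap (LinearMap.ker (X.δ (n - 1 + 1) : X.C (n - 1 + 1) →ₗ[ℝ] X.C (n - 1 + 1 + 1))).subtype
      (LinearMap.range (X.δ (n - 1) : X.C (n - 1) →ₗ[ℝ] X.C (n - 1 + 1))))

/-- The quotient seminorm on the `n`-th cohomology. -/
noncomputable def BanachCC.qnorm (X : BanachCC) (n : ℤ) (h : X.Hcoh n) : ℝ :=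
  sInf {r | ∃ z : LinearMap.ker (X.δ (n - 1 + 1) : X.C (n - 1 + 1) →ₗ[ℝ] X.C (n - 1 + 1 + 1)),
    Submodule.Quotient.mk z = h ∧ ‖(z : X.C (n - 1 + 1))‖ = r}

/-- The quotient seminorm coincides with Mathlib's quotient norm. -/
lemma BanachCC.qnorm_eq (X : BanachCC) (n : ℤ) (h : X.Hcoh n) : X.qnorm n h = ‖h‖ := by
  apply le_antisymm
  · apply le_of_forall_pos_lt_add
    intro ε hε
    obtain ⟨m, hm, hmlt⟩ := QuotientAddGroup.norm_lt_iff.1 (lt_add_of_pos_right ‖h‖ hε)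
    exact lt_of_le_of_lt (csInf_le ⟨0, by rintro r ⟨z, -, rfl⟩; exact norm_nonneg _⟩ ⟨m, hm, rfl⟩) hmlt
  · obtain ⟨z0, hz0⟩ := Submodule.Quotient.mk_surjective _ h
    unfold BanachCC.qnorm
    refine le_csInf ⟨_, z0, hz0, rfl⟩ ?_
    rintro r ⟨z, hz, rfl⟩
    exact QuotientAddGroup.le_norm_iff.1 le_rfl z hz

/-- Matsumoto–Morita: a Banach cochain complex satisfies UBC in degree `n`
iff `H^n` with the quotient seminorm is a Banach space (the seminorm is a complete norm). -/
theorem ubc_iff_cohomology_banach (X : BanachCC) (n : ℤ) :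
    (∃ κ : ℝ, 0 ≤ κ ∧ X.UBC κ n) ↔
    ((∀ h : X.Hcoh n, X.qnorm n h = 0 → h = 0) ∧
     ∀ u : ℕ → X.Hcoh n,
       (∀ ε : ℝ, 0 < ε → ∃ N : ℕ, ∀ p ≥ N, ∀ q ≥ N, X.qnorm n (u p - u q) < ε) →
       ∃ l : X.Hcoh n, ∀ ε : ℝ, 0 < ε → ∃ N : ℕ, ∀ p ≥ N, X.qnorm n (u p - l) < ε) := by
  classical
  set K := LinearMap.ker (X.δ (n - 1 + 1) : X.C (n - 1 + 1) →ₗ[ℝ] X.C (n - 1 + 1 + 1)) with hKdef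
  set B := LinearMap.range (X.δ (n - 1) : X.C (n - 1) →ₗ[ℝ] X.C (n - 1 + 1)) with hBdef
  set B' := Submodule.comap K.subtype B with hB'def
  have hKclosed : IsClosed (K : Set (X.C (n - 1 + 1))) := ContinuousLinearMap.isClosed_ker (X.δ (n - 1 + 1))
  have _iK : CompleteSpace K := hKclosed.completeSpace_coe
  -- the completeness half is unconditional
  have hcomplete : ∀ u : ℕ → X.Hcoh n,
      (∀ ε : ℝ, 0 < ε → ∃ N : ℕ, ∀ p ≥ N, ∀ q ≥ N, X.qnorm n (u p - u q) < ε) →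
      ∃ l : X.Hcoh n, ∀ ε : ℝ, 0 < ε → ∃ N : ℕ, ∀ p ≥ N, X.qnorm n (u p - l) < ε := by
    intro u hu
    have hc : CauchySeq u := by
      rw [Metric.cauchySeq_iff]
      intro ε hε
      obtain ⟨N, hN⟩ := hu ε hε
      refine ⟨N, fun p hp q hq => ?_⟩
      have := hN p hp q hq
      rwa [X.qnorm_eq, ← dist_eq_norm] at this
    obtain ⟨l, hl⟩ := cauchySeq_tendsto_of_complete hc
    refine ⟨l, fun ε hε => ?_⟩
    obtain ⟨N, hN⟩ := (Metric.tendsto_atTop.1 hl) ε hε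
    exact ⟨N, fun p hp => by rw [X.qnorm_eq, ← dist_eq_norm]; exact hN p hp⟩
  constructor
  · rintro ⟨κ, hκ, hU⟩
    refine ⟨?_, hcomplete⟩
    -- B is closed, via controlled closure
    have hBclosed : IsClosed (B : Set (X.C (n - 1 + 1))) := by
      let f : NormedAddGroupHom (X.C (n - 1)) (X.C (n - 1 + 1)) :=
        (X.δ (n - 1)).toLinearMap.toAddMonoidHom.mkNormedAddGroupHom ‖X.δ (n - 1)‖
          (fun v => (X.δ (n - 1)).le_opNorm v)
      have hfc : ⇑f = ⇑(X.δ (n - 1)) := rfl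
      have hsw : f.SurjectiveOnWith B.toAddSubgroup (κ + 1) := by
        intro h hh
        obtain ⟨c, hc1, hc2⟩ := hU h hh
        refine ⟨c, hc1, hc2.trans ?_⟩
        have : (0:ℝ) ≤ ‖h‖ := norm_nonneg _
        nlinarith
      have hsw' : f.SurjectiveOnWith B.toAddSubgroup.topologicalClosure (κ + 1 + 1) :=
        controlled_closure_of_complete (by linarith) one_pos hsw
      apply isClosed_of_closure_subset
      intro x hx
      obtain ⟨g, hg, -⟩ := hsw' x (by
        show x ∈ closure (B.toAddSubgroup : Set (X.C (n - 1 + 1)))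
        exact hx)
      exact ⟨g, hg⟩
    have hB'closed : IsClosed (B' : Set K) := by
      have : (B' : Set K) = Subtype.val ⁻¹' (B : Set (X.C (n - 1 + 1))) := rfl
      rw [this]
      exact hBclosed.preimage continuous_subtype_val
    intro h hq
    obtain ⟨z, rfl⟩ := Submodule.Quotient.mk_surjective B' h
    rw [X.qnorm_eq] at hq
    have hz : z ∈ B' := by
        haveI : IsClosed (B'.toAddSubgroup : Set K) := hB'closed
        exact QuotientAddGroup.norm_mk_eq_zero.1 hq
    exact (Submodule.Quotient.mk_eq_zero B').2 hz
  · rintro ⟨hnorm, -⟩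
    have hB'closed : IsClosed (B' : Set K) := by
      apply isClosed_of_closure_subset
      intro z hz
      have h0 : ‖(Submodule.Quotient.mk z : K ⧸ B')‖ = 0 :=
        QuotientAddGroup.norm_mk_eq_zero_iff_mem_closure.2 hz
      have := hnorm (Submodule.Quotient.mk z) (by rw [X.qnorm_eq]; exact h0)
      exact (Submodule.Quotient.mk_eq_zero B').1 this
    have hBK : ∀ x, x ∈ B → x ∈ K := by
      rintro x ⟨a, rfl⟩
      exact X.δ_sq (n - 1) a
    have hBset : (B : Set (X.C (n - 1 + 1))) = Subtype.val '' (B' : Set K) := by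
      ext x
      constructor
      · intro hx
        exact ⟨⟨x, hBK x hx⟩, hx, rfl⟩
      · rintro ⟨⟨x, hxK⟩, hx, rfl⟩
        exact hx
    have hBclosed : IsClosed (B : Set (X.C (n - 1 + 1))) := by
      rw [hBset]
      exact (hKclosed.isClosedEmbedding_subtypeVal).isClosedMap _ hB'closed
    have _iB : CompleteSpace B := hBclosed.completeSpace_coe
    let g : X.C (n - 1) →L[ℝ] B := (X.δ (n - 1)).codRestrict B (fun x => ⟨x, rfl⟩)
    have hgsurj : Function.Surjective g := by
      rintro ⟨b, a, ha⟩
      exact ⟨a, Subtype.ext ha⟩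
    obtain ⟨C0, hC0, hC⟩ := g.exists_preimage_norm_le hgsurj
    refine ⟨C0, le_of_lt hC0, ?_⟩
    intro b hb
    obtain ⟨x, hx, hxn⟩ := hC ⟨b, hb⟩
    exact ⟨x, congrArg Subtype.val hx, hxn⟩
end

section
/- If a cochain complex (C•, δ•) of Banach ℝ-modules satisfies H^n(C•, δ•) = 0, then (C•, δ•) satisfies the uniform boundary condition UBC^n in degree n. -/
/-- if `H^n(C•,δ•) = 0` (every `n`-cocycle is a coboundary), then the
Banach cochain complex satisfies `UBC^n`. -/
theorem ubc_of_cohomology_vanishing (X : BanachCC) (n : ℤ)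
    (h : ∀ x : X.C (n - 1 + 1), X.δ (n - 1 + 1) x = 0 → ∃ c, X.δ (n - 1) c = x) :
    ∃ κ : ℝ, 0 ≤ κ ∧ X.UBC κ n := by
  set g := X.δ (n - 1 + 1) with hg
  let K := LinearMap.ker (g : X.C (n - 1 + 1) →ₗ[ℝ] X.C (n - 1 + 1 + 1))
  haveI : CompleteSpace K := g.isClosed_ker.completeSpace_coe
  let f : X.C (n - 1) →L[ℝ] K :=
    (X.δ (n - 1)).codRestrict K (fun x => X.δ_sq (n - 1) x)
  have hsurj : Function.Surjective f := by
    rintro ⟨x, hx⟩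
    obtain ⟨c, hc⟩ := h x hx
    exact ⟨c, Subtype.ext hc⟩
  obtain ⟨C, hC, hS⟩ := f.exists_preimage_norm_le hsurj
  refine ⟨C, le_of_lt hC, fun b hb => ?_⟩
  obtain ⟨a, ha⟩ := hb
  have hbK : b ∈ K := by
    rw [LinearMap.mem_ker]
    show g b = 0
    rw [← ha]; exact X.δ_sq (n - 1) a
  obtain ⟨c, hc, hnorm⟩ := hS ⟨b, hbK⟩
  exact ⟨c, by exact congrArg Subtype.val hc, by simpa using hnorm⟩
end

section
/- Let ((Cᵢ•, δᵢ•))_{i∈I} be a uniform collection of seminormed R-cochain complexes (i.e., for each n, sup_{i∈I} ‖δᵢⁿ‖ < ∞), let n ∈ ℤ and κ ≥ 0. If every (Cᵢ•, δᵢ•) satisfies κ-UBC^n with the same constant κ, then the canonical map Φⁿ : Hⁿ(∏ᵇ_{i∈I} Cᵢ•) → ∏ᵇ_{i∈I} Hⁿ(Cᵢ•) from the cohomology of the bounded product to the bounded product of cohomologies is bijective. -/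
/-- A cochain complex of seminormed modules over a normed ring `R`. -/
structure SNCC (R : Type) [NormedRing R] where
  C : ℤ → Type
  [grp : ∀ n, AddCommGroup (C n)]
  [mod : ∀ n, Module R (C n)]
  ν : ∀ n, C n → ℝ
  ν_nonneg : ∀ n x, 0 ≤ ν n x
  ν_zero : ∀ n, ν n (0 : C n) = 0
  ν_smul_add : ∀ n (r : R) (x y : C n), ν n (r • x + y) ≤ ‖r‖ * ν n x + ν n y
  δ : ∀ n : ℤ, C n →ₗ[R] C (n + 1)
  δ_sq : ∀ n (x : C n), δ (n + 1) (δ n x) = 0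
  δ_bdd : ∀ n : ℤ, ∃ K : ℝ, ∀ x : C n, ν (n + 1) (δ n x) ≤ K * ν n x

attribute [instance] SNCC.grp SNCC.mod

variable {R : Type} [NormedRing R] {I : Type}

/-- `κ`-uniform boundary condition in degree `n`. -/
def SNCC.UBC (X : SNCC R) (κ : ℝ) (n : ℤ) : Prop :=
  ∀ b : X.C (n - 1 + 1), (∃ a, X.δ (n - 1) a = b) →
    ∃ c, X.δ (n - 1) c = b ∧ X.ν (n - 1) c ≤ κ * X.ν (n - 1 + 1) b

/-- A collection of seminormed cochain complexes is uniform if the differentials are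
uniformly bounded in each degree. -/
def UniformColl (X : I → SNCC R) : Prop :=
  ∀ m : ℤ, ∃ K : ℝ, ∀ i (x : (X i).C m), (X i).ν (m + 1) ((X i).δ m x) ≤ K * (X i).ν m x

/-- The quotient seminorm of the cohomology class in `H^{m+1}` of a cocycle `b`. -/
noncomputable def SNCC.clsnorm (Y : SNCC R) (m : ℤ) (b : Y.C (m + 1)) : ℝ :=
  sInf (Set.range fun c : Y.C m => Y.ν (m + 1) (b + Y.δ m c))

/-- Injectivity of the canonical map
`Φⁿ : Hⁿ(∏ᵇ Cᵢ•) → ∏ᵇ Hⁿ(Cᵢ•)`, expressed elementwise: every bounded family of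
cocycles, each of which is a coboundary, bounds uniformly (admits a bounded family
of primitives). -/
def PhiInj (X : I → SNCC R) (n : ℤ) : Prop :=
  ∀ φ : (i : I) → (X i).C (n - 1 + 1),
    BddAbove (Set.range fun i => (X i).ν (n - 1 + 1) (φ i)) →
    (∀ i, (X i).δ (n - 1 + 1) (φ i) = 0) →
    (∀ i, ∃ c, (X i).δ (n - 1) c = φ i) →
    ∃ c : (i : I) → (X i).C (n - 1),
      BddAbove (Set.range fun i => (X i).ν (n - 1) (c i)) ∧
      ∀ i, (X i).δ (n - 1) (c i) = φ i

/-- Surjectivity of the canonical map `Φⁿ : Hⁿ(∏ᵇ Cᵢ•) → ∏ᵇ Hⁿ(Cᵢ•)`, expressed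
elementwise: every family of cohomology classes with uniformly bounded quotient
seminorms is represented by a uniformly bounded family of cocycles. -/
def PhiSurj (X : I → SNCC R) (n : ℤ) : Prop :=
  ∀ φ : (i : I) → (X i).C (n - 1 + 1),
    (∀ i, (X i).δ (n - 1 + 1) (φ i) = 0) →
    BddAbove (Set.range fun i => (X i).clsnorm (n - 1) (φ i)) →
    ∃ ψ : (i : I) → (X i).C (n - 1 + 1),
      BddAbove (Set.range fun i => (X i).ν (n - 1 + 1) (ψ i)) ∧
      ∀ i, ∃ c, ψ i = φ i + (X i).δ (n - 1) c

/-- if every member of a uniform collection of seminormed cochain complexes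
satisfies `κ-UBC^n` with the same constant `κ`, then the canonical map
`Φⁿ : Hⁿ(∏ᵇ Cᵢ•) → ∏ᵇ Hⁿ(Cᵢ•)` is bijective. -/
theorem phi_bijective_of_uniform_ubc (X : I → SNCC R) (n : ℤ) (κ : ℝ) (hκ : 0 ≤ κ)
    (hunif : UniformColl X) (hubc : ∀ i, (X i).UBC κ n) :
    PhiInj X n ∧ PhiSurj X n := by
  constructor
  · intro φ hbdd hcoc hcb
    choose c hc hcν using fun i => hubc i (φ i) (hcb i)
    refine ⟨c, ?_, hc⟩
    obtain ⟨M, hM⟩ := hbdd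
    refine ⟨κ * M, ?_⟩
    rintro x ⟨i, rfl⟩
    exact (hcν i).trans (mul_le_mul_of_nonneg_left
      (hM ⟨i, rfl⟩) hκ)
  · intro φ hcoc hbdd
    have hne : ∀ i, (Set.range fun c : (X i).C (n-1) =>
        (X i).ν (n-1+1) (φ i + (X i).δ (n-1) c)).Nonempty :=
      fun i => ⟨_, ⟨0, rfl⟩⟩
    have key : ∀ i, ∃ c : (X i).C (n-1),
        (X i).ν (n-1+1) (φ i + (X i).δ (n-1) c) < (X i).clsnorm (n-1) (φ i) + 1 := by
      intro i
      obtain ⟨a, ⟨c, rfl⟩, ha⟩ := exists_lt_of_csInf_lt (hne i)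
        (lt_add_one ((X i).clsnorm (n-1) (φ i)))
      exact ⟨c, ha⟩
    choose c hc using key
    refine ⟨fun i => φ i + (X i).δ (n-1) (c i), ?_, fun i => ⟨c i, rfl⟩⟩
    obtain ⟨M, hM⟩ := hbdd
    refine ⟨M + 1, ?_⟩
    rintro x ⟨i, rfl⟩
    exact (hc i).le.trans (add_le_add_left (hM ⟨i, rfl⟩) 1)
end

section
/- Let ((Cᵢ•, δᵢ•))_{i∈I} be a uniform collection of normed ℝ-cochain complexes and n ∈ ℤ. Then the canonical map Φⁿ : Hⁿ(∏ᵇ_{i∈I} Cᵢ•) → ∏ᵇ_{i∈I} Hⁿ(Cᵢ•) is bijective if and only if there exists a finite subset J ⊂ I and a constant κ ≥ 0 such that (Cᵢ•, δᵢ•) satisfies κ-UBC^n for every i ∈ I \ J. -/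
variable {R : Type} [NormedRing R] {I : Type}

lemma SNCC_nu_smul_le (Y : SNCC ℝ) (m : ℤ) (r : ℝ) (x : Y.C m) :
    Y.ν m (r • x) ≤ |r| * Y.ν m x := by
  have h := Y.ν_smul_add m r x 0
  simpa [Y.ν_zero, Real.norm_eq_abs] using h

lemma exists_unit_witness (Y : SNCC ℝ) (n : ℤ)
    (hnorm : ∀ m (x : Y.C m), Y.ν m x = 0 → x = 0) (κ : ℝ)
    (h : ¬ Y.UBC κ n) :
    ∃ b : Y.C (n - 1 + 1), Y.ν (n - 1 + 1) b ≤ 1 ∧ Y.δ (n - 1 + 1) b = 0 ∧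
      (∃ a, Y.δ (n - 1) a = b) ∧ ∀ c, Y.δ (n - 1) c = b → κ < Y.ν (n - 1) c := by
  unfold SNCC.UBC at h
  push_neg at h
  obtain ⟨b, ⟨a, ha⟩, hb⟩ := h
  have hbne : Y.ν (n - 1 + 1) b ≠ 0 := by
    intro h0
    have hb0 : b = 0 := hnorm _ b h0
    have h1 := hb 0 (by simp [hb0])
    rw [h0, Y.ν_zero] at h1
    simp at h1
  have hbpos : 0 < Y.ν (n - 1 + 1) b := lt_of_le_of_ne (Y.ν_nonneg _ b) (Ne.symm hbne)
  set t : ℝ := (Y.ν (n - 1 + 1) b)⁻¹ with ht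
  have htpos : 0 < t := inv_pos.mpr hbpos
  refine ⟨t • b, ?_, ?_, ⟨t • a, by rw [map_smul, ha]⟩, ?_⟩
  · calc Y.ν _ (t • b) ≤ |t| * Y.ν _ b := SNCC_nu_smul_le ..
    _ = 1 := by rw [abs_of_pos htpos, ht, inv_mul_cancel₀ hbne]
  · rw [map_smul]
    have h2 : Y.δ (n - 1 + 1) b = 0 := by rw [← ha]; exact Y.δ_sq _ a
    rw [h2, smul_zero]
  · intro c hc
    have hc' : Y.δ (n - 1) ((Y.ν (n - 1 + 1) b) • c) = b := by
      rw [map_smul, hc, smul_smul, mul_inv_cancel₀ hbne, one_smul]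
    have h1 := hb _ hc'
    have h2 : Y.ν (n - 1) ((Y.ν (n - 1 + 1) b) • c)
        ≤ Y.ν (n - 1 + 1) b * Y.ν (n - 1) c := by
      have h3 := SNCC_nu_smul_le Y (n - 1) (Y.ν (n - 1 + 1) b) c
      rwa [abs_of_pos hbpos] at h3
    have h4 := lt_of_lt_of_le h1 h2
    rw [mul_comm] at h4
    exact lt_of_mul_lt_mul_left h4 hbpos.le

/-- for a uniform collection of *normed* real cochain complexes, the
canonical map `Φⁿ : Hⁿ(∏ᵇ Cᵢ•) → ∏ᵇ Hⁿ(Cᵢ•)` is bijective iff all but finitely many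
members satisfy `κ-UBC^n` for a common constant `κ ≥ 0`. -/
theorem phi_bijective_iff_ubc_cofinite (X : I → SNCC ℝ) (n : ℤ)
    (hnorm : ∀ i m (x : (X i).C m), (X i).ν m x = 0 → x = 0)
    (hunif : UniformColl X) :
    (PhiInj X n ∧ PhiSurj X n) ↔
    ∃ (J : Finset I) (κ : ℝ), 0 ≤ κ ∧ ∀ i ∉ J, (X i).UBC κ n := by
  classical
  constructor
  · rintro ⟨hinj, -⟩
    by_contra hcon
    push_neg at hcon
    -- extract a choice function for witnesses of UBC failure outside any finite set
    obtain ⟨g, hg1, hg2⟩ : ∃ g : Finset I → ℕ → I,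
        (∀ J k, g J k ∉ J) ∧ ∀ J k, ¬ (X (g J k)).UBC (k : ℝ) n := by
      have h := fun (J : Finset I) (k : ℕ) => hcon J (k : ℝ) (Nat.cast_nonneg k)
      choose g h1 h2 using h
      exact ⟨g, h1, h2⟩
    -- build a sequence of distinct indices, the k-th failing κ-UBC for κ = k
    obtain ⟨F, f, hfdef, hF0, hFsucc⟩ : ∃ (F : ℕ → Finset I) (f : ℕ → I),
        (∀ k, f k = g (F k) k) ∧ F 0 = ∅ ∧ ∀ k, F (k + 1) = insert (f k) (F k) := by
      refine ⟨fun k => Nat.rec ∅ (fun m Fm => insert (g Fm m) Fm) k,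
        fun k => g (Nat.rec ∅ (fun m Fm => insert (g Fm m) Fm) k) k,
        fun k => rfl, rfl, fun k => rfl⟩
    have hnotF : ∀ k, f k ∉ F k := fun k => by rw [hfdef]; exact hg1 _ k
    have hbad : ∀ k : ℕ, ¬ (X (f k)).UBC (k : ℝ) n := fun k => by
      rw [hfdef]; exact hg2 _ k
    have hmono : Monotone F := monotone_nat_of_le_succ fun k => by
      rw [hFsucc]; exact Finset.subset_insert _ _
    have hmemF : ∀ j k, j < k → f j ∈ F k := by
      intro j k hjk
      have h1 : f j ∈ F (j + 1) := by rw [hFsucc]; exact Finset.mem_insert_self _ _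
      exact hmono (Nat.succ_le_of_lt hjk) h1
    have hinjf : Function.Injective f := by
      intro j k hjk
      rcases Nat.lt_trichotomy j k with h | h | h
      · have h1 : f j ∈ F k := hmemF j k h
        rw [hjk] at h1
        exact absurd h1 (hnotF k)
      · exact h
      · have h1 : f k ∈ F j := hmemF k j h
        rw [← hjk] at h1
        exact absurd h1 (hnotF j)
    -- a "target constant" function on indices
    obtain ⟨K, hKf⟩ : ∃ K : I → ℝ, ∀ k : ℕ, K (f k) = k := by
      refine ⟨fun i => if h : ∃ k : ℕ, f k = i then ((h.choose : ℕ) : ℝ) else 0, ?_⟩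
      intro k
      have h : ∃ k' : ℕ, f k' = f k := ⟨k, rfl⟩
      simp only [dif_pos h]
      exact_mod_cast congrArg (Nat.cast : ℕ → ℝ) (hinjf h.choose_spec)
    have hKbad : ∀ i, (∃ k : ℕ, f k = i) → ¬ (X i).UBC (K i) n := by
      rintro i ⟨k, rfl⟩
      rw [hKf k]
      exact hbad k
    -- choose normalized bad coboundaries
    have key : ∀ i, ∃ b : (X i).C (n - 1 + 1), (X i).ν (n - 1 + 1) b ≤ 1 ∧
        (X i).δ (n - 1 + 1) b = 0 ∧ (∃ a, (X i).δ (n - 1) a = b) ∧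
        ((∃ k : ℕ, f k = i) → ∀ c, (X i).δ (n - 1) c = b → K i < (X i).ν (n - 1) c) := by
      intro i
      by_cases h : ∃ k : ℕ, f k = i
      · obtain ⟨b, h1, h2, h3, h4⟩ :=
          exists_unit_witness (X i) n (hnorm i) (K i) (hKbad i h)
        exact ⟨b, h1, h2, h3, fun _ => h4⟩
      · exact ⟨0, by rw [(X i).ν_zero]; norm_num, by rw [map_zero],
          ⟨0, by rw [map_zero]⟩, fun hk => absurd hk h⟩
    choose φ hφ1 hφ2 hφ3 hφ4 using key
    obtain ⟨c, ⟨B, hB⟩, hc⟩ :=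
      hinj φ ⟨1, by rintro x ⟨i, rfl⟩; exact hφ1 i⟩ hφ2 hφ3
    obtain ⟨k, hk⟩ := exists_nat_gt B
    have h1 : (k : ℝ) < (X (f k)).ν (n - 1) (c (f k)) := by
      have h2 := hφ4 (f k) ⟨k, rfl⟩ (c (f k)) (hc (f k))
      rwa [hKf k] at h2
    have h2 : (X (f k)).ν (n - 1) (c (f k)) ≤ B := hB ⟨f k, rfl⟩
    linarith
  · rintro ⟨J, κ, hκ, hubc⟩
    constructor
    · -- PhiInj
      intro φ hbdd hcoc hcob
      obtain ⟨M, hM⟩ := hbdd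
      have key : ∀ i, ∃ c, (X i).δ (n - 1) c = φ i ∧
          (i ∈ J ∨ (X i).ν (n - 1) c ≤ κ * (X i).ν (n - 1 + 1) (φ i)) := by
        intro i
        by_cases h : i ∈ J
        · obtain ⟨c, hc⟩ := hcob i; exact ⟨c, hc, Or.inl h⟩
        · obtain ⟨c, hc1, hc2⟩ := hubc i h (φ i) (hcob i); exact ⟨c, hc1, Or.inr hc2⟩
      choose c hc1 hc2 using key
      refine ⟨c, ⟨κ * M + ∑ j ∈ J, (X j).ν (n - 1) (c j), ?_⟩, hc1⟩
      rintro x ⟨i, rfl⟩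
      have hMi : (X i).ν (n - 1 + 1) (φ i) ≤ M := hM ⟨i, rfl⟩
      have hM0 : 0 ≤ M := le_trans ((X i).ν_nonneg _ _) hMi
      have hsum0 : 0 ≤ ∑ j ∈ J, (X j).ν (n - 1) (c j) :=
        Finset.sum_nonneg fun j _ => (X j).ν_nonneg _ _
      have hκM : 0 ≤ κ * M := mul_nonneg hκ hM0
      rcases hc2 i with h | h
      · have hle : (X i).ν (n - 1) (c i) ≤ ∑ j ∈ J, (X j).ν (n - 1) (c j) :=
          Finset.single_le_sum (fun j _ => (X j).ν_nonneg _ _) h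
        linarith
      · have hle : (X i).ν (n - 1) (c i) ≤ κ * M :=
          le_trans h (mul_le_mul_of_nonneg_left hMi hκ)
        linarith
    · -- PhiSurj
      intro φ hcoc hbdd
      obtain ⟨M, hM⟩ := hbdd
      have key : ∀ i, ∃ d : (X i).C (n - 1),
          (X i).ν (n - 1 + 1) (φ i + (X i).δ (n - 1) d)
            ≤ (X i).clsnorm (n - 1) (φ i) + 1 := by
        intro i
        have hne : (Set.range fun d : (X i).C (n - 1) =>
            (X i).ν (n - 1 + 1) (φ i + (X i).δ (n - 1) d)).Nonempty := ⟨_, 0, rfl⟩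
        have hbb : BddBelow (Set.range fun d : (X i).C (n - 1) =>
            (X i).ν (n - 1 + 1) (φ i + (X i).δ (n - 1) d)) :=
          ⟨0, by rintro x ⟨d, rfl⟩; exact (X i).ν_nonneg _ _⟩
        have hlt : (X i).clsnorm (n - 1) (φ i) < (X i).clsnorm (n - 1) (φ i) + 1 :=
          lt_add_one _
        obtain ⟨x, ⟨d, rfl⟩, hx⟩ := (csInf_lt_iff hbb hne).mp hlt
        exact ⟨d, hx.le⟩
      choose d hd using key
      refine ⟨fun i => φ i + (X i).δ (n - 1) (d i), ⟨M + 1, ?_⟩, fun i => ⟨d i, rfl⟩⟩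
      rintro x ⟨i, rfl⟩
      have hMi : (X i).clsnorm (n - 1) (φ i) ≤ M := hM ⟨i, rfl⟩
      have := hd i
      linarith
end

section
/- For any uniform collection ((Cᵢ•, δᵢ•))_{i∈I} of seminormed R-cochain complexes and any n ∈ ℤ, the canonical map Φⁿ : Hⁿ(∏ᵇ_{i∈I} Cᵢ•) → ∏ᵇ_{i∈I} Hⁿ(Cᵢ•) is surjective and has operator seminorm at most 1. -/
variable {R : Type} [NormedRing R] {I : Type}

/-- for any uniform collection of seminormed cochain complexes, the
canonical map `Φⁿ : Hⁿ(∏ᵇ Cᵢ•) → ∏ᵇ Hⁿ(Cᵢ•)` is surjective and has operator seminorm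
at most `1`: the class seminorm of each component is bounded by the sup-seminorm of any
representative of the class in the bounded product (i.e. any bounded cocycle family
corrected by any bounded coboundary family). -/
theorem phi_surjective_norm_le_one (X : I → SNCC R) (n : ℤ) (hunif : UniformColl X) :
    PhiSurj X n ∧
    ∀ φ : (i : I) → (X i).C (n - 1 + 1),
      BddAbove (Set.range fun i => (X i).ν (n - 1 + 1) (φ i)) →
      (∀ i, (X i).δ (n - 1 + 1) (φ i) = 0) →
      ∀ c : (i : I) → (X i).C (n - 1),
        BddAbove (Set.range fun i => (X i).ν (n - 1) (c i)) →
        ∀ i, (X i).clsnorm (n - 1) (φ i) ≤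
          sSup (Set.range fun j => (X j).ν (n - 1 + 1) (φ j + (X j).δ (n - 1) (c j))) := by
  constructor
  · intro φ hδ hbdd
    obtain ⟨M, hM⟩ := hbdd
    have hlt : ∀ i, ∃ c, (X i).ν (n-1+1) (φ i + (X i).δ (n-1) c) < M + 1 := by
      intro i
      have hne : (Set.range fun c : (X i).C (n-1) =>
          (X i).ν (n-1+1) (φ i + (X i).δ (n-1) c)).Nonempty := ⟨_, ⟨0, rfl⟩⟩
      have h1 : (X i).clsnorm (n-1) (φ i) ≤ M := hM ⟨i, rfl⟩
      have h2 : sInf (Set.range fun c : (X i).C (n-1) =>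
          (X i).ν (n-1+1) (φ i + (X i).δ (n-1) c)) < M + 1 :=
        lt_of_le_of_lt h1 (by linarith)
      obtain ⟨x, ⟨c, rfl⟩, hx⟩ := exists_lt_of_csInf_lt hne h2
      exact ⟨c, hx⟩
    choose c hc using hlt
    refine ⟨fun i => φ i + (X i).δ (n-1) (c i), ⟨M+1, ?_⟩, fun i => ⟨c i, rfl⟩⟩
    rintro x ⟨i, rfl⟩; exact (hc i).le
  · intro φ hAe hδ c hBe i
    obtain ⟨A, hA⟩ := hAe
    obtain ⟨B, hB⟩ := hBe
    obtain ⟨K, hK⟩ := hunif (n-1)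
    have hbdd : BddAbove (Set.range fun j =>
        (X j).ν (n-1+1) (φ j + (X j).δ (n-1) (c j))) := by
      refine ⟨‖(1:R)‖ * A + |K| * B, ?_⟩
      rintro x ⟨j, rfl⟩
      have h1 := (X j).ν_smul_add (n-1+1) 1 (φ j) ((X j).δ (n-1) (c j))
      rw [one_smul] at h1
      have h2 : (X j).ν (n-1+1) ((X j).δ (n-1) (c j)) ≤ |K| * B := by
        have h3 := hK j (c j)
        have hcb : (X j).ν (n-1) (c j) ≤ B := hB ⟨j, rfl⟩
        have hnn := (X j).ν_nonneg (n-1) (c j)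
        nlinarith [le_abs_self K, abs_nonneg K]
      have hφ : (X j).ν (n-1+1) (φ j) ≤ A := hA ⟨j, rfl⟩
      have h4 := (X j).ν_nonneg (n-1+1) (φ j)
      nlinarith [norm_nonneg (1:R)]
    have hle : (X i).clsnorm (n-1) (φ i) ≤ (X i).ν (n-1+1) (φ i + (X i).δ (n-1) (c i)) :=
      csInf_le ⟨0, by rintro x ⟨d, rfl⟩; exact (X i).ν_nonneg _ _⟩ ⟨c i, rfl⟩
    exact hle.trans (le_csSup hbdd ⟨i, rfl⟩)
end
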